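/- arXiv:1212.0103 — 7 statements merged into one kernel-verified Lean document; each statement's English description precedes it below -/
import Mathlib

section
/- Let n > 2 and let a_1, ..., a_n be integers satisfying n·(a_1 + ... + a_n)^2 = 2(n+1)·∑_{1 ≤ k < ℓ ≤ n} a_k a_ℓ. Then a_1 = a_2 = ... = a_n = 0. -/
/-!
Since `(∑ aᵢ)² = ∑ aᵢ² + 2 ∑_{k<ℓ} a_k a_ℓ`, the hypothesis says `(∑ aᵢ)² = (n + 1) ∑ aᵢ²`,
whereas Cauchy–Schwarz gives `(∑ aᵢ)² ≤ n ∑ aᵢ²`. Hence `∑ aᵢ² ≤ 0`.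
-/

open Finset

theorem Finset.sq_sum_eq_sum_sq_add_two_mul_sum_Ioi {ι R : Type*} [Fintype ι] [LinearOrder ι]
    [LocallyFiniteOrderTop ι] [LocallyFiniteOrderBot ι] [CommSemiring R] (f : ι → R) :
    (∑ i, f i) ^ 2 = ∑ i, f i ^ 2 + 2 * ∑ i, ∑ j ∈ Ioi i, f i * f j := by
  have hsplit (i : ι) : ∑ j, f i * f j =
      ∑ j ∈ Iio i, f i * f j + (f i ^ 2 + ∑ j ∈ Ioi i, f i * f j) := by
    rw [show univ = Iio i ∪ Ici i by ext j; simp [lt_or_ge],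
      sum_union (disjoint_left.2 fun _ h₁ h₂ ↦ not_le.2 (mem_Iio.1 h₁) (mem_Ici.1 h₂)),
      Ici_eq_cons_Ioi, sum_cons, sq]
  have hswap : ∑ i, ∑ j ∈ Iio i, f i * f j = ∑ i, ∑ j ∈ Ioi i, f i * f j := by
    rw [sum_comm' (t' := univ) (s' := Ioi) (by simp)]
    simp_rw [mul_comm]
  simp_rw [sq (∑ i, f i), sum_mul_sum, hsplit, sum_add_distrib, hswap]
  ring

theorem Finset.eq_zero_of_card_add_one_mul_sum_sq_le_sq_sum {ι R : Type*} [Semiring R]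
    [LinearOrder R] [IsStrictOrderedRing R] [ExistsAddOfLE R] {s : Finset ι} {f : ι → R}
    (h : (#s + 1) * ∑ i ∈ s, f i ^ 2 ≤ (∑ i ∈ s, f i) ^ 2) : ∀ i ∈ s, f i = 0 := by
  have hle : (#s : R) * ∑ i ∈ s, f i ^ 2 + ∑ i ∈ s, f i ^ 2 ≤ #s * ∑ i ∈ s, f i ^ 2 + 0 := by
    rw [add_zero, ← add_one_mul]
    exact h.trans sq_sum_le_card_mul_sum_sq
  have hzero : ∑ i ∈ s, f i ^ 2 = 0 :=
    (le_of_add_le_add_left hle).antisymm (sum_nonneg fun i _ ↦ sq_nonneg (f i))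
  intro i hi
  exact pow_eq_zero_iff two_ne_zero |>.1 <|
    (sum_eq_zero_iff_of_nonneg fun i _ ↦ sq_nonneg (f i)).1 hzero i hi

theorem stmt_1_general (n : ℕ) (a : Fin n → ℤ)
    (h : (n : ℤ) * (∑ i, a i) ^ 2 =
      2 * ((n : ℤ) + 1) * ∑ k, ∑ l ∈ Finset.Ioi k, a k * a l) :
    ∀ i, a i = 0 := by
  have hexpand := sq_sum_eq_sum_sq_add_two_mul_sum_Ioi a
  have hsq : ((n : ℤ) + 1) * ∑ i, a i ^ 2 = (∑ i, a i) ^ 2 := by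
    linear_combination h - ((n : ℤ) + 1) * hexpand
  intro i
  exact eq_zero_of_card_add_one_mul_sum_sq_le_sq_sum (s := univ) (by simpa using hsq.le) i
    (mem_univ i)

theorem stmt_1 (n : ℕ) (hn : 2 < n) (a : Fin n → ℤ)
    (h : (n : ℤ) * (∑ i, a i) ^ 2 =
      2 * ((n : ℤ) + 1) * ∑ k, ∑ l ∈ Finset.Ioi k, a k * a l) :
    ∀ i, a i = 0 :=
  stmt_1_general n a h
end

section
/- There is no ring isomorphism between ℤ[x,y]/⟨x³, y⁴ + x y³⟩ and ℤ[X,Y]/⟨X³, Y⁴ + 2XY³⟩ that is a graded ring isomorphism (i.e., induced by an invertible integer linear change of the degree-2 generators x, y ↦ αX + βY, γX + δY with αδ − βγ = ±1). -/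
/-
Every element of the ideal `⟨X³, Y⁴ + cXY³⟩` of `ℤ[X,Y]` has vanishing `Y³`-coefficient, and its
`XY³`-coefficient is `c` times its `Y⁴`-coefficient. Applied to the image `(αX + βY)³` of `x³ = 0`
this gives `β³ = 0`, so `αδ = ±1` and `α`, `δ` are units. Applied with `c = 2` to the image of
`y⁴ + xy³ = 0` it gives `4γδ³ + αδ³ = 2δ⁴`, so the unit `α = 2δ - 4γ` would be even.
-/

open MvPolynomial

/-- `R = ℤ[x,y]/⟨x³, y⁴ + x y³⟩`, the integral cohomology ring of `P(ℂ³⊕ξ)`. -/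
noncomputable def RB : Type :=
  MvPolynomial (Fin 2) ℤ ⧸
    Ideal.span ({(X 0) ^ 3, (X 1) ^ 4 + X 0 * (X 1) ^ 3} :
      Set (MvPolynomial (Fin 2) ℤ))

/-- `R' = ℤ[X,Y]/⟨X³, Y⁴ + 2XY³⟩`, the integral cohomology ring of `P(ℂ³⊕ξ^⊗2)`. -/
noncomputable def RB' : Type :=
  MvPolynomial (Fin 2) ℤ ⧸
    Ideal.span ({(X 0) ^ 3, (X 1) ^ 4 + 2 * X 0 * (X 1) ^ 3} :
      Set (MvPolynomial (Fin 2) ℤ))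

noncomputable instance : CommRing RB := Ideal.Quotient.commRing _
noncomputable instance : CommRing RB' := Ideal.Quotient.commRing _

noncomputable def xR : Fin 2 → RB := fun i => Ideal.Quotient.mk _ (X i)
noncomputable def xR' : Fin 2 → RB' := fun i => Ideal.Quotient.mk _ (X i)

section TwoVariables

variable {R : Type*} [CommRing R]

lemma coeff_linear_form_pow (a b : R) (i j : ℕ) :
    coeff (Finsupp.single 0 i + Finsupp.single 1 j)
      ((C a * X 0 + C b * X 1 : MvPolynomial (Fin 2) R) ^ (i + j)) =
      (i + j).choose i * a ^ i * b ^ j := by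
  rw [(Commute.all (C a * X 0) (C b * X 1)).add_pow', coeff_sum, Finset.sum_eq_single (i, j)]
  · simp [C_mul_X_eq_monomial, monomial_pow, smul_monomial, coeff_monomial, nsmul_eq_mul,
      mul_assoc]
  · rintro ⟨k, l⟩ - hne
    simp only [C_mul_X_eq_monomial, monomial_pow, monomial_mul, smul_monomial, coeff_monomial]
    rw [if_neg]
    simpa [Finsupp.ext_iff, Fin.forall_fin_two] using hne
  · simp

lemma coeff_single_one_linear_form_pow (a b : R) (n : ℕ) :
    coeff (Finsupp.single 1 n) ((C a * X 0 + C b * X 1 : MvPolynomial (Fin 2) R) ^ n) = b ^ n := by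
  simpa using coeff_linear_form_pow a b 0 n

lemma coeff_single_one_X_zero_mul (n : ℕ) (p : MvPolynomial (Fin 2) R) :
    coeff (Finsupp.single 1 n) (X 0 * p) = 0 := by
  simp [coeff_X_mul']

lemma coeff_single_zero_one_add_X_zero_mul (n : ℕ) (p : MvPolynomial (Fin 2) R) :
    coeff (Finsupp.single 0 1 + Finsupp.single 1 n) (X 0 * p) = coeff (Finsupp.single 1 n) p := by
  simp [coeff_X_mul']

lemma coeff_y_pow_four_quartic (a c d : R) :
    coeff (Finsupp.single 1 4) ((C c * X 0 + C d * X 1 : MvPolynomial (Fin 2) R) ^ 4 +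
      C a * X 0 * (C c * X 0 + C d * X 1) ^ 3) = d ^ 4 := by
  rw [coeff_add, mul_assoc, coeff_C_mul, coeff_single_one_X_zero_mul,
    coeff_single_one_linear_form_pow, mul_zero, add_zero]

lemma coeff_x_mul_y_pow_three_quartic (a c d : R) :
    coeff (Finsupp.single 0 1 + Finsupp.single 1 3)
      ((C c * X 0 + C d * X 1 : MvPolynomial (Fin 2) R) ^ 4 +
        C a * X 0 * (C c * X 0 + C d * X 1) ^ 3) = 4 * c * d ^ 3 + a * d ^ 3 := by
  rw [coeff_add, mul_assoc, coeff_C_mul, coeff_single_zero_one_add_X_zero_mul,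
    coeff_single_one_linear_form_pow, coeff_linear_form_pow c d 1 3]
  norm_num

noncomputable def relationIdeal (c : R) : Ideal (MvPolynomial (Fin 2) R) :=
  Ideal.span {X 0 ^ 3, X 1 ^ 4 + C c * X 0 * X 1 ^ 3}

lemma coeff_of_mem_relationIdeal {c : R} {p : MvPolynomial (Fin 2) R}
    (hp : p ∈ relationIdeal c) :
    coeff (Finsupp.single 1 3) p = 0 ∧
      coeff (Finsupp.single 0 1 + Finsupp.single 1 3) p = c * coeff (Finsupp.single 1 4) p := by
  obtain ⟨f, g, rfl⟩ := Ideal.mem_span_pair.mp hp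
  have hgen : (X 1 ^ 4 + C c * X 0 * X 1 ^ 3 : MvPolynomial (Fin 2) R) =
      monomial (Finsupp.single 1 4) 1 + monomial (Finsupp.single 0 1 + Finsupp.single 1 3) c := by
    rw [X_pow_eq_monomial, C_mul_X_eq_monomial, X_pow_eq_monomial, monomial_mul, mul_one]
  rw [hgen, X_pow_eq_monomial]
  simp only [mul_add, coeff_add, coeff_mul_monomial']
  norm_num [Finsupp.le_def, Fin.forall_fin_two]
  ring

end TwoVariables

lemma xR_zero_pow_three : xR 0 ^ 3 = 0 :=
  Ideal.Quotient.eq_zero_iff_mem.mpr (Ideal.subset_span (Set.mem_insert _ _))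

lemma xR_one_pow_four_add : xR 1 ^ 4 + xR 0 * xR 1 ^ 3 = 0 :=
  Ideal.Quotient.eq_zero_iff_mem.mpr (Ideal.subset_span (Set.mem_insert_of_mem _ rfl))

noncomputable def mkRB' : MvPolynomial (Fin 2) ℤ →+* RB' := Ideal.Quotient.mk _

lemma zsmul_xR'_add_zsmul (a b : ℤ) :
    a • xR' 0 + b • xR' 1 = mkRB' (C a * X 0 + C b * X 1) := by
  have hC (n : ℤ) : mkRB' (C n) = n := eq_intCast (mkRB'.comp C) n
  simp only [map_add, map_mul, hC, zsmul_eq_mul]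
  rfl

lemma mem_relationIdeal_two_of_mkRB'_eq_zero {p : MvPolynomial (Fin 2) ℤ} (hp : mkRB' p = 0) :
    p ∈ relationIdeal (2 : ℤ) := by
  rw [relationIdeal, map_ofNat]
  exact Ideal.Quotient.eq_zero_iff_mem.mp hp

/-- There is no graded ring isomorphism `R ≅ R'`, i.e. no ring isomorphism sending the
degree-two generators `x, y` to `αX + βY, γX + δY` with `αδ - βγ = ±1`. -/
theorem stmt_3 :
    ¬ ∃ (φ : RB ≃+* RB') (α β γ δ : ℤ),
      (α * δ - β * γ = 1 ∨ α * δ - β * γ = -1) ∧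
      φ (xR 0) = α • xR' 0 + β • xR' 1 ∧
      φ (xR 1) = γ • xR' 0 + δ • xR' 1 := by
  rintro ⟨φ, α, β, γ, δ, hdet, hx, hy⟩
  rw [zsmul_xR'_add_zsmul] at hx hy
  have hcube : (C α * X 0 + C β * X 1) ^ 3 ∈ relationIdeal (2 : ℤ) :=
    mem_relationIdeal_two_of_mkRB'_eq_zero <| by
      rw [map_pow, ← hx, ← map_pow, xR_zero_pow_three, map_zero]
  have hβ : β = 0 := by
    have h := (coeff_of_mem_relationIdeal hcube).1
    rwa [coeff_single_one_linear_form_pow, pow_eq_zero_iff three_ne_zero] at h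
  subst hβ
  rw [map_zero, zero_mul, add_zero] at hx
  have hquartic : (C γ * X 0 + C δ * X 1) ^ 4 + C α * X 0 * (C γ * X 0 + C δ * X 1) ^ 3 ∈
      relationIdeal (2 : ℤ) :=
    mem_relationIdeal_two_of_mkRB'_eq_zero <| by
      rw [map_add, map_mul, map_pow, map_pow, ← hx, ← hy, ← map_pow, ← map_pow, ← map_mul,
        ← map_add, xR_one_pow_four_add, map_zero]
  have hcoeff := (coeff_of_mem_relationIdeal hquartic).2
  rw [coeff_x_mul_y_pow_three_quartic, coeff_y_pow_four_quartic] at hcoeff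
  obtain ⟨hα, hδ⟩ : IsUnit α ∧ IsUnit δ := by
    rw [← IsUnit.mul_iff, Int.isUnit_iff]
    simpa using hdet
  rcases Int.isUnit_iff.mp hα with rfl | rfl <;> rcases Int.isUnit_iff.mp hδ with rfl | rfl <;>
    omega
end

section
/- There are no integers α, γ, δ, a, b, c with α = ±1 and δ = ±1 such that the polynomial identity (γX + δY)³((α+γ)X + δY) = (aX + bY)X³ + c(Y⁴ + 2XY³) holds in ℤ[X,Y]. -/
open MvPolynomial

theorem stmt_6 :
    ¬ ∃ (α γ δ a b c : ℤ), (α = 1 ∨ α = -1) ∧ (δ = 1 ∨ δ = -1) ∧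
      (C γ * X 0 + C δ * X 1 : MvPolynomial (Fin 2) ℤ) ^ 3 *
          (C (α + γ) * X 0 + C δ * X 1) =
        (C a * X 0 + C b * X 1) * (X 0) ^ 3 +
          C c * ((X 1) ^ 4 + 2 * X 0 * (X 1) ^ 3) := by
  rintro ⟨α, γ, δ, a, b, c, hα, hδ, h⟩
  have h1 := congrArg (MvPolynomial.eval ![0, 1]) h
  have h2 := congrArg (MvPolynomial.eval ![2, 1]) h
  simp [Matrix.cons_val_zero, Matrix.cons_val_one] at h1 h2
  have h2' := congrArg (Int.cast : ℤ → ZMod 4) h2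
  have h1' := congrArg (Int.cast : ℤ → ZMod 4) h1
  rcases hα with rfl | rfl <;> rcases hδ with rfl | rfl <;>
    push_cast at h1' h2' <;>
    rw [← h1'] at h2' <;>
    revert h2' <;>
    · ring_nf
      generalize (γ : ZMod 4) = g
      generalize (a : ZMod 4) = A
      generalize (b : ZMod 4) = B
      revert g A B
      decide
end

section
/- Let R = ℚ[x_1,...,x_h]/I where I is generated by the elements x_i·∏_{j=1}^{n_i}(x_i + ∑_{k<i} a^i_{jk} x_k) for i = 1,...,h. If for each i the Chern class relations (n_i+1)^k c_k(ξ_i) = C(n_i+1, k) c_1(ξ_i)^k hold for k = 1,...,n_i+1 (where c_k(ξ_i) is the k-th elementary symmetric polynomial in the linear forms ∑_k a^i_{jk} x_k, j = 1,...,n_i), then the elements z_i = x_i + c_1(ξ_i)/(n_i+1) satisfy z_i^{n_i+1} = 0 in R and generate R, so R ≅ ℚ[y_1,...,y_h]/⟨y_i^{n_i+1}⟩. -/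
open MvPolynomial

/-- The defining ideal of the rational cohomology ring of a generalized Bott manifold. -/
noncomputable def genBottIdeal (h : ℕ) (n : Fin h → ℕ)
    (a : (i : Fin h) → Fin (n i) → Fin h → ℚ) :
    Ideal (MvPolynomial (Fin h) ℚ) :=
  Ideal.span (Set.range fun i : Fin h =>
    X i * ∏ j : Fin (n i), ((∑ k : Fin h, C (a i j k) * X k) + X i))

/-- `c_k(ξ_i)`: the `k`-th elementary symmetric polynomial in the linear forms
`∑_{k'} a^i_{j k'} x_{k'}`, `j = 1,…,n_i`. -/
noncomputable def chern (h : ℕ) (n : Fin h → ℕ)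
    (a : (i : Fin h) → Fin (n i) → Fin h → ℚ) (i : Fin h) (k : ℕ) :
    MvPolynomial (Fin h) ℚ :=
  ∑ s ∈ Finset.powersetCard k (Finset.univ : Finset (Fin (n i))),
    ∏ j ∈ s, (∑ k' : Fin h, C (a i j k') * X k')

/-!
Write `ℓ_{ij} = ∑_k a^i_{jk} x_k`, `c_k = e_k(ℓ_{i1}, …, ℓ_{in_i})` and
`z_i = x_i + c_1/(n_i+1)`. By Vieta and the binomial theorem,
`z_i^{n_i+1} = x_i ∏_j (ℓ_{ij} + x_i) + ∑_k D_k x_i^{n_i+1-k}` with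
`D_k = C(n_i+1,k) c_1^k/(n_i+1)^k - c_k`, and the Chern relations say exactly that each `D_k`
lies in the Bott ideal `I`; hence `z_i^{n_i+1} ∈ I`. Conversely `D_k` only involves the
variables `x_l` with `l < i`, so killing all other variables shows `D_k ∈ (g_l : l < i)` for the
relators `g_l` of `I`, and induction on `i` gives `I = (z_i^{n_i+1})`. Finally `x_i ↦ z_i` is a
unitriangular substitution: it is surjective, hence (the polynomial ring being Noetherian) an
automorphism, and it carries `(x_i^{n_i+1})` onto `I`.
-/

open Finset

section Vieta

variable {A ι : Type*} [CommRing A] [Fintype ι]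

theorem mul_prod_add_eq_sum_esymm (ℓ : ι → A) (x : A) :
    x * ∏ j, (ℓ j + x) = ∑ k ∈ range (Fintype.card ι + 2),
      (univ.val.map ℓ).esymm k * x ^ (Fintype.card ι + 1 - k) := by
  have hvieta := congrArg (Polynomial.eval x)
    (Multiset.prod_X_add_C_eq_sum_esymm (univ.val.map ℓ))
  simp only [Polynomial.eval_multiset_prod, Multiset.map_map, Function.comp_def,
    Polynomial.eval_add, Polynomial.eval_X, Polynomial.eval_C, Polynomial.eval_finsetSum,
    Polynomial.eval_mul, Polynomial.eval_pow, Multiset.card_map, card_val, card_univ] at hvieta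
  have htop : (univ.val.map ℓ).esymm (Fintype.card ι + 1) = 0 := by
    rw [Multiset.esymm, Multiset.powersetCard_eq_empty _ (by simp), Multiset.map_zero,
      Multiset.sum_zero]
  rw [← prod_eq_multiset_prod] at hvieta
  rw [sum_range_succ, htop, zero_mul, add_zero]
  simp_rw [add_comm (ℓ _) x, hvieta, mul_sum]
  refine sum_congr rfl fun k hk => ?_
  rw [mul_left_comm, ← pow_succ', Nat.sub_add_comm (Nat.lt_succ_iff.mp (mem_range.mp hk))]

/-- With `t = 1/(n+1)`, `n = card ι`, the vanishing of `esymmDefect ℓ t k` is the Chern relation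
`(n+1)^k c_k = C(n+1,k) c_1^k`. -/
noncomputable def esymmDefect (ℓ : ι → A) (t : A) (k : ℕ) : A :=
  ((Fintype.card ι + 1).choose k : A) * t ^ k * (univ.val.map ℓ).esymm 1 ^ k
    - (univ.val.map ℓ).esymm k

theorem add_mul_esymm_one_pow (ℓ : ι → A) (x t : A) :
    (x + t * (univ.val.map ℓ).esymm 1) ^ (Fintype.card ι + 1) =
      x * ∏ j, (ℓ j + x) + ∑ k ∈ range (Fintype.card ι + 2),
        esymmDefect ℓ t k * x ^ (Fintype.card ι + 1 - k) := by
  rw [mul_prod_add_eq_sum_esymm, ← sum_add_distrib, add_comm x, add_pow]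
  refine sum_congr rfl fun k _ => ?_
  rw [esymmDefect]
  ring

theorem add_mul_esymm_one_pow_mem_iff {I : Ideal A} {ℓ : ι → A} {x t : A}
    (hI : ∀ k ∈ range (Fintype.card ι + 2), esymmDefect ℓ t k ∈ I) :
    (x + t * (univ.val.map ℓ).esymm 1) ^ (Fintype.card ι + 1) ∈ I ↔
      x * ∏ j, (ℓ j + x) ∈ I := by
  rw [add_mul_esymm_one_pow, Ideal.add_mem_iff_left]
  exact I.sum_mem fun k hk => I.mul_mem_right _ (hI k hk)

theorem esymmDefect_mem {S : Type*} [SetLike S A] [SubringClass S A] {s : S} {ℓ : ι → A}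
    {t : A} (hℓ : ∀ j, ℓ j ∈ s) (ht : t ∈ s) (k : ℕ) : esymmDefect ℓ t k ∈ s := by
  have hesymm : ∀ k, (univ.val.map ℓ).esymm k ∈ s := fun k => by
    rw [Finset.esymm_map_val]
    exact sum_mem fun u _ => prod_mem fun j _ => hℓ j
  exact sub_mem (mul_mem (mul_mem (natCast_mem s _) (pow_mem ht k)) (pow_mem (hesymm 1) k))
    (hesymm k)

end Vieta

theorem RingHom.injective_of_surjective_of_isNoetherianRing {R : Type*} [Ring R]
    [IsNoetherianRing R] (f : R →+* R) (hf : Function.Surjective f) : Function.Injective f := by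
  have hmono : Monotone fun m : ℕ => RingHom.ker (f ^ m) := by
    refine monotone_nat_of_le_succ fun m x hx => ?_
    rw [RingHom.mem_ker, pow_succ', RingHom.mul_def, RingHom.comp_apply, RingHom.mem_ker.mp hx,
      map_zero]
  obtain ⟨m, hm⟩ := monotone_stabilizes_iff_noetherian.mpr ‹_› ⟨_, hmono⟩
  refine (injective_iff_map_eq_zero f).mpr fun x hx => ?_
  obtain ⟨y, rfl⟩ := (hf.iterate m) x
  have hy : y ∈ RingHom.ker (f ^ (m + 1)) := by
    rwa [RingHom.mem_ker, RingHom.coe_pow, Function.iterate_succ_apply']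
  have hker : RingHom.ker (f ^ m) = RingHom.ker (f ^ (m + 1)) := hm (m + 1) m.le_succ
  rwa [← hker] at hy

section Triangular

variable {R σ : Type*} [CommRing R] [Preorder σ]

theorem aeval_surjective_of_sub_X_mem_supported [WellFoundedLT σ]
    {z : σ → MvPolynomial σ R} (hz : ∀ i, z i - X i ∈ supported R (Set.Iio i)) :
    Function.Surjective (aeval (R := R) z) := by
  have hX : ∀ i, X i ∈ (aeval (R := R) z).range := fun i => by
    induction i using WellFoundedLT.induction with
    | ind i ih =>
      have hle : supported R (Set.Iio i) ≤ (aeval (R := R) z).range :=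
        Algebra.adjoin_le (by rintro _ ⟨l, hl, rfl⟩; exact ih l hl)
      simpa [aeval_X] using sub_mem ((aeval z).mem_range_self (X i)) (hle (hz i))
  rw [← AlgHom.range_eq_top, eq_top_iff, ← adjoin_range_X]
  exact Algebra.adjoin_le (by rintro _ ⟨i, rfl⟩; exact hX i)

theorem mem_span_image_Iio_of_mem_supported {g : σ → MvPolynomial σ R}
    (hg : ∀ l, g l ∈ supported R (Set.Iic l)) (hX : ∀ l, X l ∣ g l) {i : σ}
    {p : MvPolynomial σ R} (hp : p ∈ Ideal.span (Set.range g))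
    (hpi : p ∈ supported R (Set.Iio i)) :
    p ∈ Ideal.span (g '' Set.Iio i) := by
  classical
  let π : MvPolynomial σ R →ₐ[R] MvPolynomial σ R := aeval fun l => if l < i then X l else 0
  have hπ : ∀ q ∈ supported R (Set.Iio i), π q = q := fun q hq =>
    AlgHom.adjoin_le_equalizer π (AlgHom.id R _)
      (by rintro _ ⟨l, hl, rfl⟩; simp [π, if_pos (Set.mem_Iio.mp hl)]) hq
  have hπp := Ideal.mem_map_of_mem π hp
  rw [hπ p hpi, Ideal.map_span] at hπp
  refine Ideal.span_le.mpr ?_ hπp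
  rintro _ ⟨_, ⟨l, rfl⟩, rfl⟩
  by_cases hl : l < i
  · rw [hπ _ (supported_mono (Set.Iic_subset_Iio.mpr hl) (hg l))]
    exact Ideal.subset_span ⟨l, hl, rfl⟩
  · obtain ⟨q, hq⟩ := hX l
    rw [hq, map_mul, aeval_X, if_neg hl, zero_mul]
    exact zero_mem _

end Triangular

section GenBott

variable (h : ℕ) (n : Fin h → ℕ) (a : (i : Fin h) → Fin (n i) → Fin h → ℚ)

noncomputable def genBottForm (i : Fin h) (j : Fin (n i)) : MvPolynomial (Fin h) ℚ :=
  ∑ k, C (a i j k) * X k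

noncomputable def genBottRel (i : Fin h) : MvPolynomial (Fin h) ℚ :=
  X i * ∏ j, (genBottForm h n a i j + X i)

def HasChernRelations : Prop :=
  ∀ i : Fin h, ∀ k ∈ Finset.Icc 1 (n i + 1),
    Ideal.Quotient.mk (genBottIdeal h n a) (C (((n i : ℚ) + 1) ^ k) * chern h n a i k) =
      Ideal.Quotient.mk (genBottIdeal h n a) (C ((n i + 1).choose k : ℚ) * chern h n a i 1 ^ k)

noncomputable def genBottZ (i : Fin h) : MvPolynomial (Fin h) ℚ :=
  X i + C ((n i : ℚ) + 1)⁻¹ * chern h n a i 1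

variable {h n a}

theorem chern_eq_esymm (i : Fin h) (k : ℕ) :
    chern h n a i k = (univ.val.map (genBottForm h n a i)).esymm k :=
  (Finset.esymm_map_val _ _ _).symm

theorem X_dvd_genBottRel (i : Fin h) : X i ∣ genBottRel h n a i :=
  dvd_mul_right _ _

theorem esymmDefect_genBottForm_mem_genBottIdeal
    (hc : HasChernRelations h n a) (i : Fin h) (k : ℕ)
    (hk : k ∈ range (Fintype.card (Fin (n i)) + 2)) :
    esymmDefect (genBottForm h n a i) (C ((n i : ℚ) + 1)⁻¹) k ∈ genBottIdeal h n a := by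
  rcases Nat.eq_zero_or_pos k with rfl | hk0
  · simp [esymmDefect, Multiset.esymm]
  have hk' : k ∈ Finset.Icc 1 (n i + 1) := by
    simp only [Fintype.card_fin, mem_range] at hk
    exact mem_Icc.mpr ⟨hk0, by omega⟩
  have hrel := Ideal.Quotient.eq.mp (hc i k hk')
  have hinv : (C ((n i : ℚ) + 1)⁻¹ : MvPolynomial (Fin h) ℚ) ^ k *
      C (((n i : ℚ) + 1) ^ k) = 1 := by
    rw [← map_pow, ← map_mul, ← mul_pow, inv_mul_cancel₀ (by positivity), one_pow, map_one]
  have hdefect : esymmDefect (genBottForm h n a i) (C ((n i : ℚ) + 1)⁻¹) k =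
      -C ((n i : ℚ) + 1)⁻¹ ^ k * (C (((n i : ℚ) + 1) ^ k) * chern h n a i k -
        C ((n i + 1).choose k : ℚ) * chern h n a i 1 ^ k) := by
    rw [esymmDefect, Fintype.card_fin, ← chern_eq_esymm, ← chern_eq_esymm, map_natCast]
    linear_combination chern h n a i k * hinv
  rw [hdefect]
  exact Ideal.mul_mem_left _ _ hrel

theorem genBottZ_pow_mem_genBottIdeal (hc : HasChernRelations h n a) (i : Fin h) :
    genBottZ h n a i ^ (n i + 1) ∈ genBottIdeal h n a := by
  have hmem := (add_mul_esymm_one_pow_mem_iff (x := X i)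
    (esymmDefect_genBottForm_mem_genBottIdeal hc i)).mpr (Ideal.subset_span ⟨i, rfl⟩)
  rwa [Fintype.card_fin, ← chern_eq_esymm] at hmem

theorem genBottForm_mem_supported (ha : ∀ i j k, ¬ k < i → a i j k = 0)
    (i : Fin h) (j : Fin (n i)) :
    genBottForm h n a i j ∈ supported ℚ (Set.Iio i) := by
  refine Subalgebra.sum_mem _ fun k _ => ?_
  by_cases hk : k < i
  · exact Subalgebra.mul_mem _ (Subalgebra.algebraMap_mem _ _)
      (Algebra.subset_adjoin ⟨k, hk, rfl⟩)
  · simp [ha i j k hk]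

theorem genBottRel_mem_supported (ha : ∀ i j k, ¬ k < i → a i j k = 0)
    (i : Fin h) : genBottRel h n a i ∈ supported ℚ (Set.Iic i) := by
  have hX : X i ∈ supported ℚ (Set.Iic i) :=
    Algebra.subset_adjoin ⟨i, Set.mem_Iic.mpr le_rfl, rfl⟩
  refine Subalgebra.mul_mem _ hX (Subalgebra.prod_mem _ fun j _ => Subalgebra.add_mem _ ?_ hX)
  exact supported_mono Set.Iio_subset_Iic_self (genBottForm_mem_supported ha i j)

theorem genBottZ_sub_X_mem_supported (ha : ∀ i j k, ¬ k < i → a i j k = 0)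
    (i : Fin h) : genBottZ h n a i - X i ∈ supported ℚ (Set.Iio i) := by
  rw [genBottZ, add_sub_cancel_left, chern_eq_esymm, Finset.esymm_map_val]
  exact Subalgebra.mul_mem _ (Subalgebra.algebraMap_mem _ _)
    (Subalgebra.sum_mem _ fun _ _ =>
      Subalgebra.prod_mem _ fun j _ => genBottForm_mem_supported ha i j)

theorem genBottRel_mem_span_genBottZ_pow (ha : ∀ i j k, ¬ k < i → a i j k = 0)
    (hc : HasChernRelations h n a) (i : Fin h) :
    genBottRel h n a i ∈ Ideal.span (Set.range fun l => genBottZ h n a l ^ (n l + 1)) := by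
  induction i using WellFoundedLT.induction with
  | ind i ih =>
    have hlt : Ideal.span (genBottRel h n a '' Set.Iio i) ≤
        Ideal.span (Set.range fun l => genBottZ h n a l ^ (n l + 1)) :=
      Ideal.span_le.mpr (by rintro _ ⟨l, hl, rfl⟩; exact ih l hl)
    have hdefect := fun k hk => hlt <| mem_span_image_Iio_of_mem_supported
      (genBottRel_mem_supported ha) X_dvd_genBottRel
      (esymmDefect_genBottForm_mem_genBottIdeal hc i k hk)
      (esymmDefect_mem (genBottForm_mem_supported ha i) (Subalgebra.algebraMap_mem _ _) k)
    refine (add_mul_esymm_one_pow_mem_iff (x := X i) hdefect).mp ?_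
    rw [Fintype.card_fin, ← chern_eq_esymm]
    exact Ideal.subset_span ⟨i, rfl⟩

theorem genBottIdeal_eq_span_genBottZ_pow (ha : ∀ i j k, ¬ k < i → a i j k = 0)
    (hc : HasChernRelations h n a) :
    genBottIdeal h n a = Ideal.span (Set.range fun i => genBottZ h n a i ^ (n i + 1)) := by
  refine le_antisymm (Ideal.span_le.mpr ?_) (Ideal.span_le.mpr ?_) <;> rintro _ ⟨i, rfl⟩
  · exact genBottRel_mem_span_genBottZ_pow ha hc i
  · exact genBottZ_pow_mem_genBottIdeal hc i

end GenBott

theorem stmt_8_general (h : ℕ) (n : Fin h → ℕ)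
    (a : (i : Fin h) → Fin (n i) → Fin h → ℚ)
    (ha : ∀ i j k, ¬ k < i → a i j k = 0)
    (hc : ∀ i : Fin h, ∀ k ∈ Finset.Icc 1 (n i + 1),
      Ideal.Quotient.mk (genBottIdeal h n a)
          (C (((n i : ℚ) + 1) ^ k) * chern h n a i k) =
        Ideal.Quotient.mk (genBottIdeal h n a)
          (C ((n i + 1).choose k : ℚ) * (chern h n a i 1) ^ k)) :
    (∀ i : Fin h,
        (Ideal.Quotient.mk (genBottIdeal h n a)
          (X i + C (((n i : ℚ) + 1))⁻¹ * chern h n a i 1)) ^ (n i + 1) = 0) ∧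
      Nonempty ((MvPolynomial (Fin h) ℚ ⧸ genBottIdeal h n a) ≃+*
        (MvPolynomial (Fin h) ℚ ⧸
          Ideal.span (Set.range fun i : Fin h =>
            (X i : MvPolynomial (Fin h) ℚ) ^ (n i + 1)))) := by
  have hsurj := aeval_surjective_of_sub_X_mem_supported (genBottZ_sub_X_mem_supported ha)
  have hinj :=
    (aeval (genBottZ h n a)).toRingHom.injective_of_surjective_of_isNoetherianRing hsurj
  let e := AlgEquiv.ofBijective _ ⟨hinj, hsurj⟩
  have he : genBottIdeal h n a = (Ideal.span (Set.range fun i => X i ^ (n i + 1))).map e := by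
    rw [genBottIdeal_eq_span_genBottZ_pow ha hc, Ideal.map_span, ← Set.range_comp]
    simp [e, Function.comp_def]
  refine ⟨fun i => ?_, ⟨(Ideal.quotientEquiv _ _ e.toRingEquiv he).symm⟩⟩
  rw [← map_pow, Ideal.Quotient.eq_zero_iff_mem]
  exact genBottZ_pow_mem_genBottIdeal hc i

/-- The "if" direction of Proposition 1: if the Chern class relations
`(n_i+1)^k c_k(ξ_i) = C(n_i+1,k) c_1(ξ_i)^k` hold for all `i` and `k = 1,…,n_i+1`, then
the elements `z_i = x_i + c_1(ξ_i)/(n_i+1)` satisfy `z_i^{n_i+1} = 0` and the cohomology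
ring is isomorphic to that of `∏ ℂP^{n_i}`, i.e. the manifold is `ℚ`-trivial. -/
theorem stmt_8 (h : ℕ) (n : Fin h → ℕ) (hn : ∀ i, 1 ≤ n i)
    (a : (i : Fin h) → Fin (n i) → Fin h → ℚ)
    (ha : ∀ i j k, ¬ k < i → a i j k = 0)
    (hc : ∀ i : Fin h, ∀ k ∈ Finset.Icc 1 (n i + 1),
      Ideal.Quotient.mk (genBottIdeal h n a)
          (C (((n i : ℚ) + 1) ^ k) * chern h n a i k) =
        Ideal.Quotient.mk (genBottIdeal h n a)
          (C ((n i + 1).choose k : ℚ) * (chern h n a i 1) ^ k)) :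
    (∀ i : Fin h,
        (Ideal.Quotient.mk (genBottIdeal h n a)
          (X i + C (((n i : ℚ) + 1))⁻¹ * chern h n a i 1)) ^ (n i + 1) = 0) ∧
      Nonempty ((MvPolynomial (Fin h) ℚ ⧸ genBottIdeal h n a) ≃+*
        (MvPolynomial (Fin h) ℚ ⧸
          Ideal.span (Set.range fun i : Fin h =>
            (X i : MvPolynomial (Fin h) ℚ) ^ (n i + 1)))) :=
  stmt_8_general h n a ha hc
end

section
/- In the ring R = ℚ[x_1,...,x_h]/⟨x_i ∏_{j=1}^{n_i}(∑_{k<i} a^i_{jk} x_k + x_i) : i = 1,...,h⟩, for any element z = ∑_{i=1}^h b_i x_i with b_i ≠ 0 for some fixed index i, the power z^{n_i} is nonzero in R. -/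
/-! Send `x_i` to the generator `y` of `ℚ[y]/(y^{n_i+1})` and every other `x_k` to `0`.
Since `a^i_{ji} = 0`, the `i`-th relation becomes `y^{n_i+1} = 0` and all other relations
vanish because they are multiples of `x_k`, so this is a well-defined map out of the quotient.
It sends `z` to `b_i y`, and `(b_i y)^{n_i} = b_i^{n_i} y^{n_i} ≠ 0`. -/

open MvPolynomial

namespace AdjoinRoot

variable {R : Type*} [CommRing R]

theorem root_X_pow_pow_succ (m : ℕ) :
    root (Polynomial.X ^ (m + 1) : Polynomial R) ^ (m + 1) = 0 := by
  rw [← mk_X, ← map_pow, mk_self]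

theorem root_X_pow_pow_ne_zero [Nontrivial R] (m : ℕ) :
    root (Polynomial.X ^ (m + 1) : Polynomial R) ^ m ≠ 0 := by
  rw [← mk_X, ← map_pow, Ne, mk_eq_zero, Polynomial.X_pow_dvd_iff]
  intro hcoeff
  simpa using hcoeff m m.lt_succ_self

end AdjoinRoot

theorem MvPolynomial.aeval_piSingle_sum_C_mul_X {R S σ : Type*} [CommSemiring R]
    [CommSemiring S] [Algebra R S] [Fintype σ] [DecidableEq σ] (i : σ) (y : S) (c : σ → R) :
    aeval (Pi.single i y) (∑ k, C (c k) * X k) = c i • y := by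
  simp [map_sum, Pi.single_apply, Algebra.smul_def]

theorem genBottIdeal_le_ker_aeval_piSingle (h : ℕ) (n : Fin h → ℕ)
    (a : (i : Fin h) → Fin (n i) → Fin h → ℚ) (i : Fin h) (ha : ∀ j, a i j i = 0)
    {S : Type*} [CommRing S] [Algebra ℚ S] (y : S) (hy : y ^ (n i + 1) = 0) :
    genBottIdeal h n a ≤ RingHom.ker (aeval (Pi.single i y) : MvPolynomial (Fin h) ℚ →ₐ[ℚ] S) := by
  rw [genBottIdeal, Ideal.span_le]
  rintro _ ⟨t, rfl⟩
  by_cases ht : t = i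
  · subst ht
    simp only [SetLike.mem_coe, RingHom.mem_ker, map_mul, map_prod,
      map_add, aeval_piSingle_sum_C_mul_X, ha, zero_smul, zero_add, aeval_X, Pi.single_eq_same]
    rw [Finset.prod_const, Finset.card_univ, Fintype.card_fin, ← pow_succ', hy]
  · simp [Pi.single_apply, ht]

theorem stmt_9_general (h : ℕ) (n : Fin h → ℕ)
    (a : (i : Fin h) → Fin (n i) → Fin h → ℚ)
    (ha : ∀ i j k, ¬ k < i → a i j k = 0)
    (b : Fin h → ℚ) (i : Fin h) (hb : b i ≠ 0) :
    (Ideal.Quotient.mk (genBottIdeal h n a) (∑ j, C (b j) * X j)) ^ (n i) ≠ 0 := by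
  set y := AdjoinRoot.root (Polynomial.X ^ (n i + 1) : Polynomial ℚ)
  rw [← map_pow, Ne, Ideal.Quotient.eq_zero_iff_mem]
  intro hmem
  have hzero := genBottIdeal_le_ker_aeval_piSingle h n a i (fun j => ha i j i (lt_irrefl i)) y
    (AdjoinRoot.root_X_pow_pow_succ _) hmem
  rw [RingHom.mem_ker, map_pow, aeval_piSingle_sum_C_mul_X, smul_pow] at hzero
  exact smul_ne_zero (pow_ne_zero _ hb) (AdjoinRoot.root_X_pow_pow_ne_zero _) hzero

/-- Lemma 5: if `z = ∑ b_j x_j` with `b_i ≠ 0`, then `z^{n_i} ≠ 0` in the cohomology ring. -/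
theorem stmt_9 (h : ℕ) (n : Fin h → ℕ) (hn : ∀ i, 1 ≤ n i)
    (a : (i : Fin h) → Fin (n i) → Fin h → ℚ)
    (ha : ∀ i j k, ¬ k < i → a i j k = 0)
    (b : Fin h → ℚ) (i : Fin h) (hb : b i ≠ 0) :
    (Ideal.Quotient.mk (genBottIdeal h n a) (∑ j, C (b j) * X j)) ^ (n i) ≠ 0 :=
  stmt_9_general h n a ha b i hb
end

section
/- Let n ≥ 2 and let a_1,...,a_n be integers with e_2 := ∑_{k<ℓ} a_k a_ℓ and s := ∑_k a_k satisfying (n+1)² e_2 = (n(n+1)/2) s². Then a_1 = ... = a_n = 0. -/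
/-!
With `q = ∑ aₖ²` one has `s² = q + 2 e₂`, so the hypothesis says `s² = (n + 1) q`, while
Cauchy–Schwarz gives `s² ≤ n q`. Hence `q ≤ 0`, and all `aₖ` vanish.
-/

open Finset

theorem sq_sum_eq_sum_sq_add_two_mul_sum_sum_Ioi {ι R : Type*} [Fintype ι] [LinearOrder ι]
    [LocallyFiniteOrderTop ι] [LocallyFiniteOrderBot ι] [CommSemiring R] (a : ι → R) :
    (∑ i, a i) ^ 2 = ∑ i, a i ^ 2 + 2 * ∑ i, ∑ j ∈ Ioi i, a i * a j := by
  have off_diag : 2 * ∑ i, ∑ j ∈ Ioi i, a i * a j = ∑ i, ∑ j ∈ {i}ᶜ, a i * a j := by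
    rw [← sum_sum_Ioi_add_eq_sum_sum_off_diag (fun j i => a i * a j), mul_sum]
    simp only [mul_sum, mul_comm (a _) (a _), two_mul]
  rw [off_diag, sq, sum_mul_sum, ← sum_add_distrib]
  refine sum_congr rfl fun i _ => ?_
  rw [Fintype.sum_eq_add_sum_compl i, sq]

theorem eq_zero_of_card_add_one_mul_sum_sq_le_sq_sum {ι R : Type*} [Fintype ι] [CommRing R]
    [LinearOrder R] [IsStrictOrderedRing R] (a : ι → R)
    (h : (Fintype.card ι + 1) * ∑ i, a i ^ 2 ≤ (∑ i, a i) ^ 2) (i : ι) : a i = 0 := by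
  have cauchy_schwarz := sq_sum_le_card_mul_sum_sq (s := univ) (f := a)
  rw [card_univ] at cauchy_schwarz
  have sum_sq_eq_zero : ∑ i, a i ^ 2 = 0 :=
    le_antisymm (by linarith) (sum_nonneg fun i _ => sq_nonneg (a i))
  exact pow_eq_zero_iff two_ne_zero |>.mp <|
    (sum_eq_zero_iff_of_nonneg fun j _ => sq_nonneg (a j)).mp sum_sq_eq_zero i (mem_univ i)

theorem stmt_14_general (n : ℕ) (a : Fin n → ℤ)
    (h : ((n : ℤ) + 1) ^ 2 * (∑ k, ∑ l ∈ Finset.Ioi k, a k * a l) =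
      ((n : ℤ) * ((n : ℤ) + 1) / 2) * (∑ k, a k) ^ 2) :
    ∀ i, a i = 0 := by
  set s := ∑ k, a k
  set q := ∑ k, a k ^ 2
  set e := ∑ k, ∑ l ∈ Ioi k, a k * a l
  have expand : s ^ 2 = q + 2 * e := sq_sum_eq_sum_sq_add_two_mul_sum_sum_Ioi a
  have half : (n : ℤ) * (n + 1) / 2 * 2 = n * (n + 1) :=
    Int.ediv_mul_cancel (Int.even_mul_succ_self _).two_dvd
  have cancelled : ((n : ℤ) + 1) * (((n : ℤ) + 1) * (s ^ 2 - q)) =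
      ((n : ℤ) + 1) * (n * s ^ 2) := by
    linear_combination 2 * h + s ^ 2 * half + ((n : ℤ) + 1) ^ 2 * expand
  have hsq : s ^ 2 = ((n : ℤ) + 1) * q := by
    linear_combination mul_left_cancel₀ (by positivity) cancelled
  refine eq_zero_of_card_add_one_mul_sum_sq_le_sq_sum a ?_
  rw [Fintype.card_fin, hsq]

theorem stmt_14 (n : ℕ) (hn : 2 ≤ n) (a : Fin n → ℤ)
    (h : ((n : ℤ) + 1) ^ 2 * (∑ k, ∑ l ∈ Finset.Ioi k, a k * a l) =
      ((n : ℤ) * ((n : ℤ) + 1) / 2) * (∑ k, a k) ^ 2) :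
    ∀ i, a i = 0 :=
  stmt_14_general n a h
end

section
/- In the ring R = ℚ[x_1,...,x_h]/⟨x_i ∏_{j=1}^{n_i}(∑_{k<i} a^i_{jk}x_k + x_i)⟩, suppose z = ∑_j b_j x_j satisfies z^{N+1} = 0 where N = min_i n_i. Then b_j = 0 for every index j with n_j > N. -/
/-!
Send `x_j` to `X` and every other generator to `0`, landing in `ℚ[X]`. The relation indexed by
`j` becomes `X ^ (n_j + 1)`, since `a^j_{mj} = 0` makes each of its linear factors equal to `X`,
and every other relation vanishes through its leading factor `x_i`. Hence `z ^ (N + 1)`, which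
maps to `b_j ^ (N + 1) X ^ (N + 1)`, lies in the ideal only if `X ^ (n_j + 1)` divides that
monomial, forcing `b_j = 0` when `N < n_j`.
-/

open MvPolynomial

section GenBott

variable {h : ℕ} {n : Fin h → ℕ} {a : (i : Fin h) → Fin (n i) → Fin h → ℚ}
  {A : Type*} [CommRing A] [Algebra ℚ A]

lemma aeval_single_linearForm (b : Fin h → ℚ) (j : Fin h) (t : A) :
    aeval (Pi.single j t) (∑ k, C (b k) * X k) = b j • t := by
  simp only [map_sum, map_mul, aeval_C, aeval_X, ← Algebra.smul_def]
  rw [Finset.sum_eq_single j (fun k _ hk => by rw [Pi.single_eq_of_ne hk, smul_zero]) (by simp),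
    Pi.single_eq_same]

lemma aeval_single_genBottFactor {j : Fin h} (t : A) (m : Fin (n j)) (ha : a j m j = 0) :
    aeval (Pi.single j t) ((∑ k, C (a j m k) * X k) + X j) = t := by
  rw [map_add, aeval_single_linearForm, ha, zero_smul, zero_add, aeval_X, Pi.single_eq_same]

lemma genBottIdeal_le_comap_aeval_single (J : Ideal A) (j : Fin h) (t : A)
    (ht : t ^ (n j + 1) ∈ J) (ha : ∀ m, a j m j = 0) :
    genBottIdeal h n a ≤ J.comap (aeval (Pi.single j t)) := by
  rw [genBottIdeal, Ideal.span_le]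
  rintro _ ⟨i, rfl⟩
  by_cases hij : i = j
  · subst hij
    simpa [aeval_single_genBottFactor t _ (ha _), pow_succ'] using ht
  · simp [Pi.single_apply, hij]

end GenBott

lemma Polynomial.X_pow_dvd_C_mul_X_pow_iff {R : Type*} [Semiring R] {c : R} {k m : ℕ}
    (hkm : k < m) : Polynomial.X ^ m ∣ Polynomial.C c * Polynomial.X ^ k ↔ c = 0 := by
  refine ⟨fun hdvd => ?_, fun hc => by simp [hc]⟩
  simpa using Polynomial.X_pow_dvd_iff.mp hdvd k hkm

theorem stmt_18_general (h : ℕ) (n : Fin h → ℕ)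
    (a : (i : Fin h) → Fin (n i) → Fin h → ℚ)
    (ha : ∀ i j k, ¬ k < i → a i j k = 0)
    (b : Fin h → ℚ)
    (N : ℕ)
    (hz : (Ideal.Quotient.mk (genBottIdeal h n a) (∑ j, C (b j) * X j)) ^ (N + 1) = 0) :
    ∀ j, N < n j → b j = 0 := by
  intro j hj
  have hmem : (∑ k, C (b k) * X k) ^ (N + 1) ∈ genBottIdeal h n a := by
    rwa [← Ideal.Quotient.eq_zero_iff_mem, map_pow]
  have hmapped := genBottIdeal_le_comap_aeval_single (Ideal.span {Polynomial.X ^ (n j + 1)}) j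
    (Polynomial.X : Polynomial ℚ) (Ideal.mem_span_singleton_self _)
    (fun m => ha j m j (lt_irrefl j)) hmem
  rw [Ideal.mem_comap, map_pow, aeval_single_linearForm, smul_pow, Polynomial.smul_eq_C_mul,
    Ideal.mem_span_singleton, Polynomial.X_pow_dvd_C_mul_X_pow_iff (by omega)] at hmapped
  exact pow_eq_zero_iff (Nat.succ_ne_zero N) |>.mp hmapped

/-- If `z = ∑ b_j x_j` satisfies `z^{N+1} = 0` where `N = min_i n_i`, then `b_j = 0`
for every `j` with `n_j > N`. -/
theorem stmt_18 (h : ℕ) (hh : 0 < h) (n : Fin h → ℕ) (hn : ∀ i, 1 ≤ n i)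
    (a : (i : Fin h) → Fin (n i) → Fin h → ℚ)
    (ha : ∀ i j k, ¬ k < i → a i j k = 0)
    (b : Fin h → ℚ)
    (N : ℕ) (hN : N = Finset.univ.inf' (@Finset.univ_nonempty _ _ (Fin.pos_iff_nonempty.mp hh)) n)
    (hz : (Ideal.Quotient.mk (genBottIdeal h n a) (∑ j, C (b j) * X j)) ^ (N + 1) = 0) :
    ∀ j, N < n j → b j = 0 :=
  stmt_18_general h n a ha b N hz
end
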